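/- arXiv:1709.06838 — 3 statements merged into one kernel-verified Lean document; each statement's English description precedes it below -/
import Mathlib

section
/- Tensorization of the power functional: let g be a nonnegative random variable in L^q on a product probability space with n independent coordinates X_1,...,X_n, where q ∈ (1,2]. Then E[g^q] - (E[g])^q ≤ E[ Σ_{i=1}^n ( E_i[g^q] - (E_i[g])^q ) ], where E_i denotes expectation with respect to the i-th coordinate only. -/
/-!
Write `Ent(f) = 𝔼 f ^ q - (𝔼 f) ^ q`. With `D(x, y) = x ^ q - y ^ q - q y ^ (q - 1) (x - y)` the
Bregman divergence of `x ↦ x ^ q`, one has `Ent(f) = 𝔼 D(f, 𝔼 f)`. For `q ∈ (1, 2]` the function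
`D` is jointly convex on the quadrant (its Hessian determinant is nonnegative by Bernoulli's
inequality with exponent `2 - q`), so Jensen's inequality in the plane makes `Ent` convex:
`Ent(∫ K(·, b) db) ≤ ∫ Ent(K(·, b)) db`.

Let `g_k` be `g` with its first `k` coordinates integrated out. Since `g_{k+1} = E_k g_k`, the
entropy telescopes: `Ent(g) = ∑_k 𝔼 Ent_k(g_k)`. Finally `g_k` arises from `g` by averaging over
coordinates other than `k`, and by convexity of `Ent` in the `k`-th coordinate each such average
can only decrease `𝔼 Ent_k`, so `𝔼 Ent_k(g_k) ≤ 𝔼 Ent_k(g)`.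
-/

open MeasureTheory Real Set

variable {q : ℝ}

lemma le_one_add_rpow {x : ℝ} (hx : 0 ≤ x) (hq : 1 ≤ q) : x ≤ 1 + x ^ q := by
  rcases le_total x 1 with h | h
  · linarith [rpow_nonneg hx q]
  · linarith [self_le_rpow_of_one_le h hq]

lemma mul_rpow_sub_one_le (hq : 1 ≤ q) {x y : ℝ} (hx : 0 ≤ x) (hy : 0 ≤ y) :
    x * y ^ (q - 1) ≤ x ^ q + y ^ q := by
  rcases le_total x y with h | h
  · calc x * y ^ (q - 1) ≤ y * y ^ (q - 1) := by gcongr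
      _ = y ^ q := by rw [← rpow_one_add' hy (by linarith), add_sub_cancel]
      _ ≤ x ^ q + y ^ q := by linarith [rpow_nonneg hx q]
  · calc x * y ^ (q - 1) ≤ x * x ^ (q - 1) := by gcongr
      _ = x ^ q := by rw [← rpow_one_add' hx (by linarith), add_sub_cancel]
      _ ≤ x ^ q + y ^ q := by linarith [rpow_nonneg hy q]

/-- The Bregman divergence of `x ↦ x ^ q`. -/
noncomputable def rpowBregman (q : ℝ) (p : ℝ × ℝ) : ℝ :=
  p.1 ^ q - p.2 ^ q - q * p.2 ^ (q - 1) * (p.1 - p.2)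

lemma continuous_rpowBregman (hq : 1 ≤ q) : Continuous (rpowBregman q) := by
  unfold rpowBregman
  have h := continuous_rpow_const (q := q) (by linarith)
  have h' := continuous_rpow_const (q := q - 1) (by linarith)
  fun_prop

lemma rpowBregman_hessian_nonneg (hq1 : 1 < q) (hq2 : q ≤ 2) {A B : ℝ} (hA : 0 < A) (hB : 0 < B)
    (u v : ℝ) :
    0 ≤ A ^ (q - 2) * u ^ 2 - 2 * B ^ (q - 2) * u * v
      + (B ^ (q - 2) - (q - 2) * B ^ (q - 3) * (A - B)) * v ^ 2 := by
  set r := A / B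
  have hr : 0 < r := div_pos hA hB
  have hBq : 0 < B ^ (q - 2) := rpow_pos_of_pos hB _
  have hA' : A ^ (q - 2) = r ^ (q - 2) * B ^ (q - 2) := by
    rw [← mul_rpow hr.le hB.le, div_mul_cancel₀ _ hB.ne']
  have hB' : B ^ (q - 3) * (A - B) = B ^ (q - 2) * (r - 1) := by
    rw [show q - 2 = (q - 3) + 1 by ring, rpow_add_one hB.ne', mul_assoc, mul_sub_one,
      mul_div_cancel₀ _ hB.ne']
  have hbern : r ^ (2 - q) ≤ 1 + (2 - q) * (r - 1) := by
    simpa using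
      rpow_one_add_le_one_add_mul_self (s := r - 1) (by linarith) (by linarith) (by linarith)
  have hkey : 1 ≤ r ^ (q - 2) * (1 - (q - 2) * (r - 1)) := by
    have h1 : r ^ (q - 2) * r ^ (2 - q) = 1 := by
      rw [← rpow_add hr]; simp
    nlinarith [rpow_pos_of_pos hr (q - 2)]
  rw [hA', mul_assoc (q - 2), hB']
  nlinarith [sq_nonneg (r ^ (q - 2) * u - v), rpow_pos_of_pos hr (q - 2),
    mul_nonneg (mul_nonneg hBq.le (sub_nonneg.2 hkey)) (sq_nonneg v)]

lemma hasDerivAt_rpow_affine {c d p t : ℝ} (h : 0 < c + t * d) :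
    HasDerivAt (fun s => (c + s * d) ^ p) (p * (c + t * d) ^ (p - 1) * d) t := by
  convert ((hasDerivAt_mul_const d).const_add c).rpow_const (p := p) (Or.inl h.ne') using 1
  ring

lemma convexOn_rpowBregman_segment (hq1 : 1 < q) (hq2 : q ≤ 2) {x y dx dy : ℝ}
    (hx : ∀ t ∈ Ioo (0 : ℝ) 1, 0 < x + t * dx) (hy : ∀ t ∈ Ioo (0 : ℝ) 1, 0 < y + t * dy) :
    ConvexOn ℝ (Icc 0 1) (fun t => rpowBregman q (x + t * dx, y + t * dy)) := by
  have hdiff (t : ℝ) : HasDerivAt (fun s => (x + s * dx) - (y + s * dy)) (dx - dy) t :=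
    ((hasDerivAt_mul_const dx).const_add x).sub ((hasDerivAt_mul_const dy).const_add y)
  refine convexOn_of_hasDerivWithinAt2_nonneg (convex_Icc 0 1)
    (f' := fun t => q * (((x + t * dx) ^ (q - 1) - (y + t * dy) ^ (q - 1)) * dx
      - (q - 1) * (y + t * dy) ^ (q - 2) * ((x + t * dx) - (y + t * dy)) * dy))
    (f'' := fun t => q * (q - 1) * ((x + t * dx) ^ (q - 2) * dx ^ 2
      - 2 * (y + t * dy) ^ (q - 2) * dx * dy + ((y + t * dy) ^ (q - 2)
        - (q - 2) * (y + t * dy) ^ (q - 3) * ((x + t * dx) - (y + t * dy))) * dy ^ 2))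
    ((continuous_rpowBregman hq1.le).comp (by fun_prop)).continuousOn ?_ ?_ ?_
  all_goals intro t ht; rw [interior_Icc] at ht
  · have hA := hasDerivAt_rpow_affine (p := q) (hx t ht)
    have hB := hasDerivAt_rpow_affine (p := q) (hy t ht)
    have hB' := hasDerivAt_rpow_affine (p := q - 1) (hy t ht)
    refine (((hA.sub hB).sub ((hB'.const_mul q).mul (hdiff t))).congr_deriv ?_).hasDerivWithinAt
    rw [show q - 1 - 1 = q - 2 by ring]; ring
  · have hA := hasDerivAt_rpow_affine (p := q - 1) (hx t ht)
    have hB := hasDerivAt_rpow_affine (p := q - 1) (hy t ht)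
    have hB' := hasDerivAt_rpow_affine (p := q - 2) (hy t ht)
    refine ((((hA.sub hB).mul_const dx).sub
      (((hB'.const_mul (q - 1)).mul (hdiff t)).mul_const dy)).const_mul q |>.congr_deriv ?_)
      |>.hasDerivWithinAt
    rw [show q - 1 - 1 = q - 2 by ring, show q - 2 - 1 = q - 3 by ring]; ring
  · exact mul_nonneg (by nlinarith) (rpowBregman_hessian_nonneg hq1 hq2 (hx t ht) (hy t ht) dx dy)

lemma convexOn_rpowBregman_Ioi (hq1 : 1 < q) (hq2 : q ≤ 2) :
    ConvexOn ℝ (Ioi 0 ×ˢ Ioi 0) (rpowBregman q) := by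
  refine ⟨(convex_Ioi 0).prod (convex_Ioi 0), ?_⟩
  rintro ⟨x₁, y₁⟩ ⟨hx₁, hy₁⟩ ⟨x₂, y₂⟩ ⟨hx₂, hy₂⟩ a b ha hb hab
  have hpos {c₁ c₂ : ℝ} (h₁ : 0 < c₁) (h₂ : 0 < c₂) : ∀ t ∈ Ioo (0 : ℝ) 1, 0 < c₁ + t * (c₂ - c₁) :=
    fun t ⟨ht0, ht1⟩ => by nlinarith
  have h := (convexOn_rpowBregman_segment hq1 hq2 (hpos hx₁ hx₂) (hpos hy₁ hy₂)).2
    (left_mem_Icc.2 zero_le_one) (right_mem_Icc.2 zero_le_one) ha hb hab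
  have hb' : b = 1 - a := by linarith
  simp only [smul_eq_mul, mul_zero, mul_one, zero_add, zero_mul, add_zero, one_mul,
    add_sub_cancel] at h
  refine (le_of_eq ?_).trans h
  simp only [Prod.smul_mk, Prod.mk_add_mk, smul_eq_mul, hb']
  ring_nf

open Filter Topology in
lemma convexOn_rpowBregman (hq1 : 1 < q) (hq2 : q ≤ 2) :
    ConvexOn ℝ (Ici 0 ×ˢ Ici 0) (rpowBregman q) := by
  refine ⟨(convex_Ici 0).prod (convex_Ici 0), ?_⟩
  intro p hp p' hp' a b ha hb hab
  -- shift both points by `(ε, ε)` into the open quadrant, then let `ε → 0`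
  set shift : ℝ → ℝ × ℝ → ℝ × ℝ := fun ε z => z + (ε, ε)
  have hmem {ε : ℝ} (hε : 0 < ε) {z : ℝ × ℝ} (hz : z ∈ Ici 0 ×ˢ Ici 0) :
      shift ε z ∈ Ioi 0 ×ˢ Ioi 0 := by
    obtain ⟨h₁, h₂⟩ := hz
    simp only [mem_Ici, mem_prod, mem_Ioi] at h₁ h₂ ⊢
    exact ⟨by simp [shift]; linarith, by simp [shift]; linarith⟩
  have hshift : ∀ ε > 0, rpowBregman q (a • shift ε p + b • shift ε p')
      ≤ a • rpowBregman q (shift ε p) + b • rpowBregman q (shift ε p') := fun ε hε =>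
    (convexOn_rpowBregman_Ioi hq1 hq2).2 (hmem hε hp) (hmem hε hp') ha hb hab
  have hlim {u : ℝ → ℝ × ℝ} (hu : Continuous u) :
      Tendsto (fun ε => rpowBregman q (u ε)) (𝓝[>] 0) (𝓝 (rpowBregman q (u 0))) :=
    (((continuous_rpowBregman hq1.le).comp hu).tendsto 0).mono_left nhdsWithin_le_nhds
  have := le_of_tendsto_of_tendsto
    (hlim (u := fun ε => a • shift ε p + b • shift ε p') (by fun_prop))
    (((hlim (u := (shift · p)) (by fun_prop)).const_smul a).add
      ((hlim (u := (shift · p')) (by fun_prop)).const_smul b))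
    (eventually_nhdsWithin_of_forall hshift)
  simpa [shift, Prod.mk_zero_zero] using this

noncomputable def powEntropy {α : Type*} [MeasurableSpace α] (q : ℝ) (μ : Measure α) (f : α → ℝ) :
    ℝ :=
  ∫ x, f x ^ q ∂μ - (∫ x, f x ∂μ) ^ q

section Integration

variable {α β : Type*} [MeasurableSpace α] [MeasurableSpace β] {μ : Measure α} {ν : Measure β}

lemma integrable_of_integrable_rpow [IsFiniteMeasure μ] (hq : 1 ≤ q) {f : α → ℝ}
    (hf : AEStronglyMeasurable f μ) (hf0 : ∀ x, 0 ≤ f x) (hfq : Integrable (fun x => f x ^ q) μ) :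
    Integrable f μ :=
  ((integrable_const 1).add hfq).mono' hf <| ae_of_all _ fun x => by
    rw [Real.norm_of_nonneg (hf0 x)]; exact le_one_add_rpow (hf0 x) hq

lemma rpow_integral_le_integral_rpow [IsProbabilityMeasure μ] (hq : 1 ≤ q) {f : α → ℝ}
    (hf0 : ∀ x, 0 ≤ f x) (hf : Integrable f μ) (hfq : Integrable (fun x => f x ^ q) μ) :
    (∫ x, f x ∂μ) ^ q ≤ ∫ x, f x ^ q ∂μ :=
  (convexOn_rpow hq).map_integral_le (continuous_rpow_const (by linarith)).continuousOn
    isClosed_Ici (ae_of_all _ hf0) hf hfq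

lemma integrable_rpow_sub_one_mul (hq : 1 ≤ q) {f g : α → ℝ} (hf : AEStronglyMeasurable f μ)
    (hg : AEStronglyMeasurable g μ) (hf0 : ∀ x, 0 ≤ f x) (hg0 : ∀ x, 0 ≤ g x)
    (hfq : Integrable (fun x => f x ^ q) μ) (hgq : Integrable (fun x => g x ^ q) μ) :
    Integrable (fun x => g x ^ (q - 1) * f x) μ :=
  (hfq.add hgq).mono' (((continuous_rpow_const (by linarith)).comp_aestronglyMeasurable hg).mul hf)
    <| ae_of_all _ fun x => by
      rw [Real.norm_of_nonneg (mul_nonneg (rpow_nonneg (hg0 x) _) (hf0 x)), mul_comm]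
      exact mul_rpow_sub_one_le hq (hf0 x) (hg0 x)

lemma integrable_rpowBregman (hq : 1 ≤ q) {f g : α → ℝ} (hf : AEStronglyMeasurable f μ)
    (hg : AEStronglyMeasurable g μ) (hf0 : ∀ x, 0 ≤ f x) (hg0 : ∀ x, 0 ≤ g x)
    (hfq : Integrable (fun x => f x ^ q) μ) (hgq : Integrable (fun x => g x ^ q) μ) :
    Integrable (fun x => rpowBregman q (f x, g x)) μ := by
  have hcross := (integrable_rpow_sub_one_mul hq hf hg hf0 hg0 hfq hgq).sub
    (integrable_rpow_sub_one_mul hq hg hg hg0 hg0 hgq hgq)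
  refine ((hfq.sub hgq).sub (hcross.const_mul q)).congr (ae_of_all _ fun x => ?_)
  simp only [rpowBregman, Pi.sub_apply]
  ring

lemma rpowBregman_integral_le [IsProbabilityMeasure μ] (hq1 : 1 < q) (hq2 : q ≤ 2) {f g : α → ℝ}
    (hf : AEStronglyMeasurable f μ) (hg : AEStronglyMeasurable g μ) (hf0 : ∀ x, 0 ≤ f x)
    (hg0 : ∀ x, 0 ≤ g x) (hfq : Integrable (fun x => f x ^ q) μ)
    (hgq : Integrable (fun x => g x ^ q) μ) :
    rpowBregman q (∫ x, f x ∂μ, ∫ x, g x ∂μ) ≤ ∫ x, rpowBregman q (f x, g x) ∂μ := by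
  have hfi := integrable_of_integrable_rpow hq1.le hf hf0 hfq
  have hgi := integrable_of_integrable_rpow hq1.le hg hg0 hgq
  rw [← integral_pair hfi hgi]
  exact (convexOn_rpowBregman hq1 hq2).map_integral_le
    (continuous_rpowBregman hq1.le).continuousOn (isClosed_Ici.prod isClosed_Ici)
    (ae_of_all _ fun x => ⟨hf0 x, hg0 x⟩) (hfi.prodMk hgi)
    (integrable_rpowBregman hq1.le hf hg hf0 hg0 hfq hgq)

lemma integral_rpowBregman_integral [IsProbabilityMeasure μ] {f : α → ℝ} (hf : Integrable f μ)
    (hfq : Integrable (fun x => f x ^ q) μ) :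
    ∫ x, rpowBregman q (f x, ∫ y, f y ∂μ) ∂μ = powEntropy q μ f := by
  set m := ∫ y, f y ∂μ
  have h1 : Integrable (fun x => f x ^ q - m ^ q) μ := hfq.sub (integrable_const _)
  have h2 : Integrable (fun x => q * m ^ (q - 1) * (f x - m)) μ :=
    (hf.sub (integrable_const _)).const_mul _
  simp only [rpowBregman, powEntropy]
  rw [integral_sub h1 h2, integral_sub hfq (integrable_const _), integral_const_mul,
    integral_sub hf (integrable_const _)]
  simp [m]

lemma integrable_rpow_integral_prod_left [SFinite μ] [IsProbabilityMeasure ν] (hq : 1 ≤ q)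
    {K : α × β → ℝ} (hK : Measurable K) (hK0 : ∀ p, 0 ≤ K p)
    (hKq : Integrable (fun p => K p ^ q) (μ.prod ν)) :
    Integrable (fun x => (∫ y, K (x, y) ∂ν) ^ q) μ := by
  refine hKq.integral_prod_left.mono'
    ((continuous_rpow_const (by linarith)).comp_stronglyMeasurable
      hK.stronglyMeasurable.integral_prod_right').aestronglyMeasurable ?_
  filter_upwards [hKq.prod_right_ae] with x hx
  have hK0' : ∀ y, 0 ≤ K (x, y) := fun y => hK0 _
  rw [Real.norm_of_nonneg (rpow_nonneg (integral_nonneg hK0') _)]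
  exact rpow_integral_le_integral_rpow hq hK0'
    (integrable_of_integrable_rpow hq (hK.comp measurable_prodMk_left).aestronglyMeasurable
      hK0' hx) hx

lemma integrable_powEntropy_prod_left [SFinite μ] [IsProbabilityMeasure ν] (hq : 1 ≤ q)
    {K : α × β → ℝ} (hK : Measurable K) (hK0 : ∀ p, 0 ≤ K p)
    (hKq : Integrable (fun p => K p ^ q) (μ.prod ν)) :
    Integrable (fun x => powEntropy q ν (fun y => K (x, y))) μ :=
  hKq.integral_prod_left.sub (integrable_rpow_integral_prod_left hq hK hK0 hKq)

theorem powEntropy_integral_le [IsProbabilityMeasure μ] [IsProbabilityMeasure ν] (hq1 : 1 < q)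
    (hq2 : q ≤ 2) {K : α × β → ℝ} (hK : Measurable K) (hK0 : ∀ p, 0 ≤ K p)
    (hKq : Integrable (fun p => K p ^ q) (μ.prod ν)) :
    powEntropy q μ (fun x => ∫ y, K (x, y) ∂ν) ≤ ∫ y, powEntropy q μ (fun x => K (x, y)) ∂ν := by
  set G := fun x => ∫ y, K (x, y) ∂ν
  set H := fun y => ∫ x, K (x, y) ∂μ
  have hKswap : Integrable (fun p : β × α => K p.swap ^ q) (ν.prod μ) := hKq.swap
  have hKi := integrable_of_integrable_rpow hq1.le hK.aestronglyMeasurable hK0 hKq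
  have hGm : StronglyMeasurable G := hK.stronglyMeasurable.integral_prod_right'
  have hHm : StronglyMeasurable H :=
    (hK.comp measurable_swap).stronglyMeasurable.integral_prod_right'
  have hG0 : ∀ x, 0 ≤ G x := fun x => integral_nonneg fun y => hK0 _
  have hH0 : ∀ y, 0 ≤ H y := fun y => integral_nonneg fun x => hK0 _
  have hGq : Integrable (fun x => G x ^ q) μ := integrable_rpow_integral_prod_left hq1.le hK hK0 hKq
  have hHq : Integrable (fun y => H y ^ q) ν :=
    integrable_rpow_integral_prod_left hq1.le (hK.comp measurable_swap) (fun p => hK0 _) hKswap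
  have hD : Integrable (fun p : α × β => rpowBregman q (K p, H p.2)) (μ.prod ν) :=
    integrable_rpowBregman hq1.le hK.aestronglyMeasurable
      (hHm.comp_measurable measurable_snd).aestronglyMeasurable hK0 (fun p => hH0 _) hKq
      (hHq.comp_snd μ)
  have hGH : ∫ y, H y ∂ν = ∫ x, G x ∂μ :=
    (integral_integral_swap (f := fun x y => K (x, y)) hKi).symm
  calc powEntropy q μ G = ∫ x, rpowBregman q (G x, ∫ y, H y ∂ν) ∂μ := by
        rw [hGH, integral_rpowBregman_integral hKi.integral_prod_left hGq]
    _ ≤ ∫ x, ∫ y, rpowBregman q (K (x, y), H y) ∂ν ∂μ := by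
        refine integral_mono_ae (integrable_rpowBregman hq1.le hGm.aestronglyMeasurable
          aestronglyMeasurable_const hG0 (fun _ => integral_nonneg hH0) hGq (integrable_const _))
          hD.integral_prod_left ?_
        filter_upwards [hKq.prod_right_ae] with x hx
        exact rpowBregman_integral_le hq1 hq2 (hK.comp measurable_prodMk_left).aestronglyMeasurable
          hHm.aestronglyMeasurable (fun y => hK0 _) hH0 hx hHq
    _ = ∫ y, ∫ x, rpowBregman q (K (x, y), H y) ∂μ ∂ν :=
        integral_integral_swap (f := fun x y => rpowBregman q (K (x, y), H y)) hD
    _ = ∫ y, powEntropy q μ (fun x => K (x, y)) ∂ν := by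
        refine integral_congr_ae ?_
        filter_upwards [hKswap.prod_right_ae] with y hy
        exact integral_rpowBregman_integral (integrable_of_integrable_rpow hq1.le
          (hK.comp measurable_prodMk_right).aestronglyMeasurable (fun x => hK0 _) hy) hy

end Integration

section Coordinates

open Function

variable {ι : Type*} [DecidableEq ι] {Ω : ι → Type*} [∀ i, MeasurableSpace (Ω i)]
  {μ : ∀ i, Measure (Ω i)}

-- `coordIntegral μ i` is the operator `E_i` integrating out the coordinate `X_i` only.
noncomputable def coordIntegral (μ : ∀ i, Measure (Ω i)) (i : ι) (f : (∀ i, Ω i) → ℝ)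
    (x : ∀ i, Ω i) : ℝ :=
  ∫ y, f (update x i y) ∂μ i

noncomputable def coordEntropy (q : ℝ) (μ : ∀ i, Measure (Ω i)) (i : ι) (f : (∀ i, Ω i) → ℝ)
    (x : ∀ i, Ω i) : ℝ :=
  powEntropy q (μ i) (fun y => f (update x i y))

lemma Measurable.coordIntegral [∀ i, SFinite (μ i)] {i : ι} {f : (∀ i, Ω i) → ℝ}
    (hf : Measurable f) : Measurable (coordIntegral μ i f) :=
  (hf.comp measurable_update').stronglyMeasurable.integral_prod_right'.measurable

lemma coordIntegral_nonneg {i : ι} {f : (∀ i, Ω i) → ℝ} (hf0 : ∀ x, 0 ≤ f x) (x : ∀ i, Ω i) :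
    0 ≤ coordIntegral μ i f x :=
  integral_nonneg fun _ => hf0 _

variable [Fintype ι] [∀ i, IsProbabilityMeasure (μ i)]

theorem measurePreserving_update (i : ι) :
    MeasurePreserving (fun p : (∀ j, Ω j) × Ω i => update p.1 i p.2)
      ((Measure.pi μ).prod (μ i)) (Measure.pi μ) := by
  refine ⟨measurable_update', (Measure.pi_eq fun s hs => ?_).symm⟩
  have hpre : (fun p : (∀ j, Ω j) × Ω i => update p.1 i p.2) ⁻¹' univ.pi s
      = univ.pi (update s i univ) ×ˢ s i := by
    ext ⟨x, y⟩
    simp only [mem_preimage, mem_pi, mem_univ, true_implies, mem_prod, forall_update_iff]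
    refine ⟨fun ⟨hy, hx⟩ => ⟨fun j => ?_, hy⟩,
      fun ⟨hx, hy⟩ => ⟨hy, fun j hj => by simpa [hj] using hx j⟩⟩
    by_cases hj : j = i
    · subst hj; simp
    · simpa [hj] using hx j hj
  rw [Measure.map_apply measurable_update' (MeasurableSet.univ_pi hs), hpre, Measure.prod_prod,
    Measure.pi_pi, Fintype.prod_eq_mul_prod_compl i, Fintype.prod_eq_mul_prod_compl i]
  simp only [update_self, measure_univ, one_mul]
  rw [mul_comm]
  congr 1
  refine Finset.prod_congr rfl fun j hj => ?_
  rw [update_of_ne (by simpa using hj)]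

lemma integral_coordIntegral {i : ι} {f : (∀ i, Ω i) → ℝ} (hf : Integrable f (Measure.pi μ)) :
    ∫ x, coordIntegral μ i f x ∂Measure.pi μ = ∫ x, f x ∂Measure.pi μ := by
  have h := measurePreserving_update (μ := μ) i
  calc ∫ x, coordIntegral μ i f x ∂Measure.pi μ
      = ∫ p, f (update p.1 i p.2) ∂(Measure.pi μ).prod (μ i) :=
        (integral_prod _ (h.integrable_comp_of_integrable hf)).symm
    _ = ∫ x, f x ∂(((Measure.pi μ).prod (μ i)).map fun p => update p.1 i p.2) :=
        (integral_map h.measurable.aemeasurable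
          (by rw [h.map_eq]; exact hf.aestronglyMeasurable)).symm
    _ = ∫ x, f x ∂Measure.pi μ := by rw [h.map_eq]

lemma MeasureTheory.Integrable.coordIntegral {i : ι} {f : (∀ i, Ω i) → ℝ}
    (hf : Integrable f (Measure.pi μ)) : Integrable (coordIntegral μ i f) (Measure.pi μ) :=
  ((measurePreserving_update i).integrable_comp_of_integrable hf).integral_prod_left

variable {f : (∀ i, Ω i) → ℝ}

lemma integrable_rpow_coordIntegral (hq : 1 ≤ q) {i : ι} (hf : Measurable f) (hf0 : ∀ x, 0 ≤ f x)
    (hfq : Integrable (fun x => f x ^ q) (Measure.pi μ)) :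
    Integrable (fun x => coordIntegral μ i f x ^ q) (Measure.pi μ) :=
  integrable_rpow_integral_prod_left hq (hf.comp measurable_update') (fun _ => hf0 _)
    ((measurePreserving_update i).integrable_comp_of_integrable hfq)

lemma integrable_coordEntropy (hq : 1 ≤ q) {i : ι} (hf : Measurable f) (hf0 : ∀ x, 0 ≤ f x)
    (hfq : Integrable (fun x => f x ^ q) (Measure.pi μ)) :
    Integrable (coordEntropy q μ i f) (Measure.pi μ) :=
  integrable_powEntropy_prod_left hq (hf.comp measurable_update') (fun _ => hf0 _)
    ((measurePreserving_update i).integrable_comp_of_integrable hfq)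

lemma integral_coordEntropy (hq : 1 ≤ q) {i : ι} (hf : Measurable f) (hf0 : ∀ x, 0 ≤ f x)
    (hfq : Integrable (fun x => f x ^ q) (Measure.pi μ)) :
    ∫ x, coordEntropy q μ i f x ∂Measure.pi μ
      = ∫ x, f x ^ q ∂Measure.pi μ - ∫ x, coordIntegral μ i f x ^ q ∂Measure.pi μ := by
  change ∫ x, (coordIntegral μ i (fun x => f x ^ q) x - coordIntegral μ i f x ^ q) ∂Measure.pi μ = _
  rw [integral_sub hfq.coordIntegral (integrable_rpow_coordIntegral hq hf hf0 hfq),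
    integral_coordIntegral hfq]

theorem integral_coordEntropy_coordIntegral_le (hq1 : 1 < q) (hq2 : q ≤ 2) {i j : ι} (hij : i ≠ j)
    (hf : Measurable f) (hf0 : ∀ x, 0 ≤ f x) (hfq : Integrable (fun x => f x ^ q) (Measure.pi μ)) :
    ∫ x, coordEntropy q μ j (coordIntegral μ i f) x ∂Measure.pi μ
      ≤ ∫ x, coordEntropy q μ j f x ∂Measure.pi μ := by
  have hΨ : MeasurePreserving
      (fun p : (∀ k, Ω k) × Ω j × Ω i => update (update p.1 j p.2.1) i p.2.2)
      ((Measure.pi μ).prod ((μ j).prod (μ i))) (Measure.pi μ) :=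
    (measurePreserving_update i).comp (((measurePreserving_update j).prod (.id (μ i))).comp
      (MeasurePreserving.symm _ (measurePreserving_prodAssoc _ _ _)))
  have hslice := (hΨ.integrable_comp_of_integrable hfq).prod_right_ae
  calc ∫ x, coordEntropy q μ j (coordIntegral μ i f) x ∂Measure.pi μ
      ≤ ∫ x, coordIntegral μ i (coordEntropy q μ j f) x ∂Measure.pi μ := by
        refine integral_mono_ae (integrable_coordEntropy hq1.le hf.coordIntegral
          (coordIntegral_nonneg hf0) (integrable_rpow_coordIntegral hq1.le hf hf0 hfq))
          (integrable_coordEntropy hq1.le hf hf0 hfq).coordIntegral ?_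
        filter_upwards [hslice] with x hx
        have h := powEntropy_integral_le hq1 hq2
          (hf.comp (by fun_prop : Measurable fun p : Ω j × Ω i => update (update x j p.1) i p.2))
          (fun _ => hf0 _) hx
        simpa only [coordEntropy, coordIntegral, update_comm hij, Function.comp_apply] using h
    _ = ∫ x, coordEntropy q μ j f x ∂Measure.pi μ :=
        integral_coordIntegral (integrable_coordEntropy hq1.le hf hf0 hfq)

end Coordinates

section Telescoping

variable {n : ℕ} {Ω : Fin n → Type*} [∀ i, MeasurableSpace (Ω i)] {μ : ∀ i, Measure (Ω i)}
  {f : (∀ i, Ω i) → ℝ}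

/-- `f` with the coordinates `0, …, k - 1` integrated out, one at a time. -/
noncomputable def partialMean (μ : ∀ i, Measure (Ω i)) (f : (∀ i, Ω i) → ℝ) :
    ℕ → (∀ i, Ω i) → ℝ
  | 0 => f
  | k + 1 => if h : k < n then coordIntegral μ ⟨k, h⟩ (partialMean μ f k) else partialMean μ f k

@[simp]
lemma partialMean_zero : partialMean μ f 0 = f := rfl

lemma partialMean_succ {k : ℕ} (hk : k < n) :
    partialMean μ f (k + 1) = coordIntegral μ ⟨k, hk⟩ (partialMean μ f k) := by
  simp [partialMean, hk]

lemma partialMean_nonneg (hf0 : ∀ x, 0 ≤ f x) (k : ℕ) (x : ∀ i, Ω i) : 0 ≤ partialMean μ f k x := by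
  induction k generalizing x with
  | zero => exact hf0 x
  | succ k ih =>
    simp only [partialMean]
    split_ifs
    exacts [coordIntegral_nonneg ih x, ih x]

lemma partialMean_congr (k : ℕ) {x x' : ∀ i, Ω i} (h : ∀ j : Fin n, k ≤ j → x j = x' j) :
    partialMean μ f k x = partialMean μ f k x' := by
  induction k generalizing x x' with
  | zero => rw [show x = x' from funext fun j => h j (Nat.zero_le _)]
  | succ k ih =>
    simp only [partialMean]
    split_ifs with hk
    · refine integral_congr_ae (ae_of_all _ fun y => ih fun j hj => ?_)
      rcases eq_or_ne j ⟨k, hk⟩ with rfl | hne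
      · simp
      · have : k + 1 ≤ j := Nat.lt_of_le_of_ne hj (fun h => hne (Fin.ext h.symm))
        simp [Function.update_of_ne hne, h j this]
    · exact ih fun j _ => absurd j.isLt (by omega)

variable [∀ i, IsProbabilityMeasure (μ i)]

lemma measurable_partialMean (hf : Measurable f) (k : ℕ) : Measurable (partialMean μ f k) := by
  induction k with
  | zero => exact hf
  | succ k ih =>
    simp only [partialMean]
    split_ifs
    exacts [ih.coordIntegral, ih]

lemma integrable_rpow_partialMean (hq : 1 ≤ q) (hf : Measurable f) (hf0 : ∀ x, 0 ≤ f x)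
    (hfq : Integrable (fun x => f x ^ q) (Measure.pi μ)) (k : ℕ) :
    Integrable (fun x => partialMean μ f k x ^ q) (Measure.pi μ) := by
  induction k with
  | zero => exact hfq
  | succ k ih =>
    simp only [partialMean]
    split_ifs
    exacts [integrable_rpow_coordIntegral hq (measurable_partialMean hf k)
      (partialMean_nonneg hf0 k) ih, ih]

lemma integral_partialMean (hq : 1 ≤ q) (hf : Measurable f) (hf0 : ∀ x, 0 ≤ f x)
    (hfq : Integrable (fun x => f x ^ q) (Measure.pi μ)) (k : ℕ) :
    ∫ x, partialMean μ f k x ∂Measure.pi μ = ∫ x, f x ∂Measure.pi μ := by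
  induction k with
  | zero => rfl
  | succ k ih =>
    simp only [partialMean]
    split_ifs
    · rw [integral_coordIntegral (integrable_of_integrable_rpow hq
        (measurable_partialMean hf k).aestronglyMeasurable (partialMean_nonneg hf0 k)
        (integrable_rpow_partialMean hq hf hf0 hfq k)), ih]
    · exact ih

lemma partialMean_eq_integral (hq : 1 ≤ q) (hf : Measurable f) (hf0 : ∀ x, 0 ≤ f x)
    (hfq : Integrable (fun x => f x ^ q) (Measure.pi μ)) (x : ∀ i, Ω i) :
    partialMean μ f n x = ∫ x, f x ∂Measure.pi μ := by
  have hconst : ∀ x', partialMean μ f n x' = partialMean μ f n x :=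
    fun x' => partialMean_congr n fun j hj => absurd j.isLt (by omega)
  rw [← integral_partialMean hq hf hf0 hfq n, integral_congr_ae (ae_of_all _ hconst)]
  simp

lemma powEntropy_eq_sum_integral_coordEntropy_partialMean (hq : 1 ≤ q) (hf : Measurable f)
    (hf0 : ∀ x, 0 ≤ f x) (hfq : Integrable (fun x => f x ^ q) (Measure.pi μ)) :
    powEntropy q (Measure.pi μ) f
      = ∑ k : Fin n, ∫ x, coordEntropy q μ k (partialMean μ f k) x ∂Measure.pi μ := by
  set a : ℕ → ℝ := fun k => ∫ x, partialMean μ f k x ^ q ∂Measure.pi μ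
  have hstep (k : Fin n) :
      ∫ x, coordEntropy q μ k (partialMean μ f k) x ∂Measure.pi μ = a k - a (k + 1) := by
    rw [integral_coordEntropy hq (measurable_partialMean hf k) (partialMean_nonneg hf0 k)
      (integrable_rpow_partialMean hq hf hf0 hfq k)]
    simp only [a, partialMean_succ k.isLt, Fin.eta]
  rw [Finset.sum_congr rfl fun k _ => hstep k, Fin.sum_univ_eq_sum_range (fun k => a k - a (k + 1)),
    Finset.sum_range_sub']
  simp [a, powEntropy, partialMean_eq_integral hq hf hf0 hfq]

lemma integral_coordEntropy_partialMean_le (hq1 : 1 < q) (hq2 : q ≤ 2) (hf : Measurable f)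
    (hf0 : ∀ x, 0 ≤ f x) (hfq : Integrable (fun x => f x ^ q) (Measure.pi μ)) (k : Fin n) :
    ∫ x, coordEntropy q μ k (partialMean μ f k) x ∂Measure.pi μ
      ≤ ∫ x, coordEntropy q μ k f x ∂Measure.pi μ := by
  suffices ∀ m ≤ (k : ℕ), ∫ x, coordEntropy q μ k (partialMean μ f m) x ∂Measure.pi μ
      ≤ ∫ x, coordEntropy q μ k f x ∂Measure.pi μ from this k le_rfl
  intro m hm
  induction m with
  | zero => rfl
  | succ m ih =>
    have hmn : m < n := by omega
    rw [partialMean_succ hmn]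
    exact (integral_coordEntropy_coordIntegral_le hq1 hq2 (Fin.ne_of_val_ne (by simp; omega))
      (measurable_partialMean hf m) (partialMean_nonneg hf0 m)
      (integrable_rpow_partialMean hq1.le hf hf0 hfq m)).trans (ih (by omega))

end Telescoping

theorem stmt_4_general (n : ℕ) {Ω : Fin n → Type*} [∀ i, MeasurableSpace (Ω i)]
    (μ : ∀ i, Measure (Ω i)) [∀ i, IsProbabilityMeasure (μ i)]
    (g : (∀ i, Ω i) → ℝ) (hg : Measurable g) (hg0 : ∀ x, 0 ≤ g x)
    (q : ℝ) (hq1 : 1 < q) (hq2 : q ≤ 2)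
    (hintq : Integrable (fun x => g x ^ q) (Measure.pi μ)) :
    ∫ x, g x ^ q ∂Measure.pi μ - (∫ x, g x ∂Measure.pi μ) ^ q
      ≤ ∫ x, (∑ i, ((∫ y, g (Function.update x i y) ^ q ∂μ i)
          - (∫ y, g (Function.update x i y) ∂μ i) ^ q)) ∂Measure.pi μ := by
  calc powEntropy q (Measure.pi μ) g
      = ∑ k, ∫ x, coordEntropy q μ k (partialMean μ g k) x ∂Measure.pi μ :=
        powEntropy_eq_sum_integral_coordEntropy_partialMean hq1.le hg hg0 hintq
    _ ≤ ∑ k, ∫ x, coordEntropy q μ k g x ∂Measure.pi μ := Finset.sum_le_sum fun k _ =>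
        integral_coordEntropy_partialMean_le hq1 hq2 hg hg0 hintq k
    _ = ∫ x, ∑ k, coordEntropy q μ k g x ∂Measure.pi μ :=
        (integral_finsetSum _ fun k _ => integrable_coordEntropy hq1.le hg hg0 hintq).symm

theorem stmt_4 (n : ℕ) {Ω : Fin n → Type*} [∀ i, MeasurableSpace (Ω i)]
    (μ : ∀ i, Measure (Ω i)) [∀ i, IsProbabilityMeasure (μ i)]
    (g : (∀ i, Ω i) → ℝ) (hg : Measurable g) (hg0 : ∀ x, 0 ≤ g x)
    (q : ℝ) (hq1 : 1 < q) (hq2 : q ≤ 2)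
    (hintq : Integrable (fun x => g x ^ q) (Measure.pi μ))
    (hint1 : Integrable g (Measure.pi μ)) :
    ∫ x, g x ^ q ∂Measure.pi μ - (∫ x, g x ∂Measure.pi μ) ^ q
      ≤ ∫ x, (∑ i, ((∫ y, g (Function.update x i y) ^ q ∂μ i)
          - (∫ y, g (Function.update x i y) ∂μ i) ^ q)) ∂Measure.pi μ :=
  stmt_4_general n μ g hg hg0 q hq1 hq2 hintq
end

section
/- For real p ≥ 2, the function u_p(x) = (1 - 1/p)^{p/2} + (1/(2κ_p)) x^{1-2/p} - x, with κ_p = (1/2)(1 - (1-1/p)^{p/2})^{-1}, is concave on [0,∞), satisfies u_p(0) > 0 and u_p(1) = 0; consequently any x ≥ 0 with u_p(x) ≥ 0 satisfies x ≤ 1. -/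
open Set

theorem ConcaveOn.le_of_nonneg_of_pos_of_eq_zero {s : Set ℝ} {f : ℝ → ℝ} {a b t : ℝ}
    (hf : ConcaveOn ℝ s f) (ha : a ∈ s) (ht : t ∈ s) (hab : a < b) (hfa : 0 < f a)
    (hfb : f b = 0) (hft : 0 ≤ f t) : t ≤ b := by
  by_contra! hbt
  have hb : b ∈ openSegment ℝ a t := Ioo_subset_openSegment ⟨hab, hbt⟩
  have : f t < f b := hf.lt_right_of_left_lt ha ht hb (hfb ▸ hfa)
  linarith

theorem concaveOn_const_add_mul_rpow_sub_id (c k : ℝ) {q : ℝ} (hk : 0 ≤ k) (hq₀ : 0 ≤ q)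
    (hq₁ : q ≤ 1) : ConcaveOn ℝ (Ici 0) fun x : ℝ => c + k * x ^ q - x := by
  refine ((((Real.concaveOn_rpow hq₀ hq₁).smul hk).add_const c).sub
    (convexOn_id (convex_Ici 0))).congr fun x _ => ?_
  simp only [Pi.sub_apply, Pi.add_apply, smul_eq_mul, id]
  ring

section Constants

variable {p : ℝ}

theorem one_sub_inv_rpow_half_pos (hp : 2 ≤ p) : 0 < (1 - 1 / p) ^ (p / 2) := by
  have : 1 / p ≤ 1 / 2 := one_div_le_one_div_of_le two_pos hp
  exact Real.rpow_pos_of_pos (by linarith) _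

theorem one_sub_inv_rpow_half_lt_one (hp : 2 ≤ p) : (1 - 1 / p) ^ (p / 2) < 1 := by
  have : 1 / p ≤ 1 / 2 := one_div_le_one_div_of_le two_pos hp
  have : 0 < 1 / p := by positivity
  exact Real.rpow_lt_one (by linarith) (by linarith) (by linarith)

theorem one_sub_two_div_mem_Icc (hp : 2 ≤ p) : 1 - 2 / p ∈ Icc (0 : ℝ) 1 := by
  have : 2 / p ≤ 1 := (div_le_one (by linarith)).2 hp
  have : 0 ≤ 2 / p := by positivity
  constructor <;> linarith

end Constants

theorem stmt_12 (p : ℝ) (hp : 2 ≤ p)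
    (κ : ℝ) (hκ : κ = (1 / 2) * (1 - (1 - 1 / p) ^ (p / 2))⁻¹)
    (u : ℝ → ℝ) (hu : u = fun x => (1 - 1 / p) ^ (p / 2) + (1 / (2 * κ)) * x ^ (1 - 2 / p) - x) :
    ConcaveOn ℝ (Set.Ici 0) u ∧ 0 < u 0 ∧ u 1 = 0 ∧ ∀ x : ℝ, 0 ≤ x → 0 ≤ u x → x ≤ 1 := by
  set c := (1 - 1 / p) ^ (p / 2)
  have hc₀ : 0 < c := one_sub_inv_rpow_half_pos hp
  have hc₁ : c < 1 := one_sub_inv_rpow_half_lt_one hp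
  have hκc : 1 / (2 * κ) = 1 - c := by
    rw [hκ]
    field_simp [sub_ne_zero.2 hc₁.ne']
  obtain ⟨hq₀, hq₁⟩ := one_sub_two_div_mem_Icc hp
  subst hu
  rw [hκc]
  have hconc := concaveOn_const_add_mul_rpow_sub_id c (1 - c) (sub_nonneg.2 hc₁.le) hq₀ hq₁
  -- `0 ^ (1 - 2 / p)` is `1` when `p = 2`, and `0` otherwise
  have hu₀ : 0 < c + (1 - c) * (0 : ℝ) ^ (1 - 2 / p) - 0 := by
    have : 0 ≤ (1 - c) * (0 : ℝ) ^ (1 - 2 / p) :=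
      mul_nonneg (sub_nonneg.2 hc₁.le) (Real.rpow_nonneg le_rfl _)
    linarith
  have hu₁ : c + (1 - c) * (1 : ℝ) ^ (1 - 2 / p) - 1 = 0 := by
    rw [Real.one_rpow]; ring
  exact ⟨hconc, hu₀, hu₁, fun x hx hux =>
    hconc.le_of_nonneg_of_pos_of_eq_zero (mem_Ici.2 le_rfl) (mem_Ici.2 hx) one_pos hu₀ hu₁ hux⟩
end

section
/- Lemma: for bounded f(X) with independent X_1,...,X_n, the second-order Hilbert–Schmidt norm of the first-order difference vector satisfies |𝔥(|𝔥 f|)| ≤ |𝔥^{(2)} f|_HS pointwise, where 𝔥_i f = ½||f - T_i f||_{i,∞}, 𝔥_{ij} f = ¼||f - T_i f - T_j f + T_{ij} f||_{i,j,∞} for i≠j, (𝔥^{(2)} f)_{ij} = 𝔥_{ij} f for i≠j and 0 on the diagonal, and |·|_HS is the Euclidean norm on ℝ^{n²}. -/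
/-!
Fix `i`. For almost every `(X_i, X̄_i)`, the reverse triangle inequality in `ℝⁿ` bounds
`|𝔥 f| - T_i |𝔥 f|` by the Euclidean norm of the vector `(𝔥_j f - T_i 𝔥_j f)_j`. Its `i`-th entry
vanishes because `𝔥_i f` does not depend on `X_i`; for `j ≠ i`, the reverse triangle inequality for
the sup-seminorm `‖·‖_{j,∞}`, applied to `f - T_j f` and `T_i (f - T_j f)`, bounds it by
`2 𝔥_{ij} f`. Taking the essential supremum over `(X_i, X̄_i)` gives
`𝔥_i |𝔥 f| ≤ (∑_{j ≠ i} (𝔥_{ij} f)²)^{1/2}`; square and sum over `i`.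
-/

open MeasureTheory

/-- First-order difference operator `𝔥_i f(x) = ½ ‖f - T_i f‖_{i,∞}`, where the essential
supremum is taken over both `X_i` and its independent copy `X̄_i`. -/
noncomputable def hDiff1 (n : ℕ) {Ω : Fin n → Type*} [∀ i, MeasurableSpace (Ω i)]
    (μ : ∀ i, Measure (Ω i)) (f : (∀ i, Ω i) → ℝ) (i : Fin n) (x : ∀ i, Ω i) : ℝ :=
  (1 / 2) * essSup
    (fun q : Ω i × Ω i => |f (Function.update x i q.1) - f (Function.update x i q.2)|)
    ((μ i).prod (μ i))

/-- Euclidean norm `|𝔥 f|(x)` of the vector of first-order differences. -/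
noncomputable def hDiffNorm (n : ℕ) {Ω : Fin n → Type*} [∀ i, MeasurableSpace (Ω i)]
    (μ : ∀ i, Measure (Ω i)) (f : (∀ i, Ω i) → ℝ) (x : ∀ i, Ω i) : ℝ :=
  Real.sqrt (∑ i, hDiff1 n μ f i x ^ 2)

/-- Second-order difference operator
`𝔥_{ij} f(x) = ¼ ‖f - T_i f - T_j f + T_{ij} f‖_{i,j,∞}`. -/
noncomputable def hDiff2 (n : ℕ) {Ω : Fin n → Type*} [∀ i, MeasurableSpace (Ω i)]
    (μ : ∀ i, Measure (Ω i)) (f : (∀ i, Ω i) → ℝ) (i j : Fin n) (x : ∀ i, Ω i) : ℝ :=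
  (1 / 4) * essSup
    (fun q : (Ω i × Ω i) × (Ω j × Ω j) =>
      |f (Function.update (Function.update x i q.1.1) j q.2.1)
        - f (Function.update (Function.update x i q.1.2) j q.2.1)
        - f (Function.update (Function.update x i q.1.1) j q.2.2)
        + f (Function.update (Function.update x i q.1.2) j q.2.2)|)
    (((μ i).prod (μ i)).prod ((μ j).prod (μ j)))

open Filter Function Set

section EssSup

-- On `ℝ`, `essSup` is a conditionally complete `limsup`: without boundedness it takes junk values.
variable {α : Type*} [MeasurableSpace α] {μ : Measure α} {g g₁ g₂ : α → ℝ} {c : ℝ}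

lemma ae_le_essSup_of_isBounded (hg : Bornology.IsBounded (range g)) :
    ∀ᵐ y ∂μ, g y ≤ essSup g μ :=
  ae_le_essSup hg.bddAbove.isBoundedUnder_of_range

variable [NeZero μ]

lemma essSup_le_of_isBounded (hg : Bornology.IsBounded (range g)) (hc : ∀ᵐ y ∂μ, g y ≤ c) :
    essSup g μ ≤ c := by
  obtain ⟨a, ha⟩ := hg.bddBelow
  exact essSup_le_of_ae_le c hc (isCoboundedUnder_le_of_le _ fun y => ha ⟨y, rfl⟩)

lemma essSup_nonneg_of_isBounded (h0 : ∀ y, 0 ≤ g y) (hg : Bornology.IsBounded (range g)) :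
    0 ≤ essSup g μ := by
  simpa only [essSup_const'] using
    essSup_mono_ae (μ := μ) (f := fun _ => 0) (ae_of_all _ h0)
      (isCoboundedUnder_le_of_le _ fun _ => le_rfl) hg.bddAbove.isBoundedUnder_of_range

lemma essSup_le_essSup_add (hg₁ : Bornology.IsBounded (range g₁))
    (hg₂ : Bornology.IsBounded (range g₂)) (h : ∀ᵐ y ∂μ, g₁ y ≤ g₂ y + c) :
    essSup g₁ μ ≤ essSup g₂ μ + c :=
  essSup_le_of_isBounded hg₁ <| by
    filter_upwards [h, ae_le_essSup_of_isBounded hg₂] with y h₁ h₂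
    linarith

lemma abs_essSup_sub_essSup_le (hg₁ : Bornology.IsBounded (range g₁))
    (hg₂ : Bornology.IsBounded (range g₂)) (h : ∀ᵐ y ∂μ, |g₁ y - g₂ y| ≤ c) :
    |essSup g₁ μ - essSup g₂ μ| ≤ c := by
  have h₁₂ := essSup_le_essSup_add hg₁ hg₂ (h.mono fun y hy => by linarith [(abs_le.1 hy).2])
  have h₂₁ := essSup_le_essSup_add hg₂ hg₁ (h.mono fun y hy => by linarith [(abs_le.1 hy).1])
  exact abs_sub_le_iff.2 ⟨by linarith, by linarith⟩

end EssSup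

lemma abs_sqrt_sum_sq_sub_sqrt_sum_sq_le {ι : Type*} [Fintype ι] (a b : ι → ℝ) :
    |√(∑ i, a i ^ 2) - √(∑ i, b i ^ 2)| ≤ √(∑ i, (a i - b i) ^ 2) := by
  simpa [EuclideanSpace.norm_eq] using
    abs_norm_sub_norm_le (WithLp.toLp 2 a : EuclideanSpace ℝ ι) (WithLp.toLp 2 b)

section Differences

variable {n : ℕ} {Ω : Fin n → Type*} {f : (∀ i, Ω i) → ℝ} {C : ℝ}

def coordDiff (f : (∀ i, Ω i) → ℝ) (x : ∀ i, Ω i) (i : Fin n) (q : Ω i × Ω i) : ℝ :=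
  |f (update x i q.1) - f (update x i q.2)|

def coordDiff₂ (f : (∀ i, Ω i) → ℝ) (x : ∀ i, Ω i) (i j : Fin n)
    (q : (Ω i × Ω i) × (Ω j × Ω j)) : ℝ :=
  |f (update (update x i q.1.1) j q.2.1) - f (update (update x i q.1.2) j q.2.1)
    - f (update (update x i q.1.1) j q.2.2) + f (update (update x i q.1.2) j q.2.2)|

lemma coordDiff_mem_Icc (hb : ∀ x, |f x| ≤ C) (x : ∀ i, Ω i) (i : Fin n) (q : Ω i × Ω i) :
    coordDiff f x i q ∈ Icc 0 (2 * C) := by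
  have h₁ := abs_le.1 (hb (update x i q.1))
  have h₂ := abs_le.1 (hb (update x i q.2))
  exact ⟨abs_nonneg _, abs_le.2 ⟨by linarith, by linarith⟩⟩

lemma isBounded_range_coordDiff (hb : ∀ x, |f x| ≤ C) (x : ∀ i, Ω i) (i : Fin n) :
    Bornology.IsBounded (range (coordDiff f x i)) :=
  (Metric.isBounded_Icc 0 (2 * C)).subset (range_subset_iff.2 (coordDiff_mem_Icc hb x i))

lemma isBounded_range_coordDiff₂ (hb : ∀ x, |f x| ≤ C) (x : ∀ i, Ω i) (i j : Fin n) :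
    Bornology.IsBounded (range (coordDiff₂ f x i j)) := by
  refine (Metric.isBounded_Icc 0 (4 * C)).subset (range_subset_iff.2 fun q => ?_)
  have h₁ := abs_le.1 (hb (update (update x i q.1.1) j q.2.1))
  have h₂ := abs_le.1 (hb (update (update x i q.1.2) j q.2.1))
  have h₃ := abs_le.1 (hb (update (update x i q.1.1) j q.2.2))
  have h₄ := abs_le.1 (hb (update (update x i q.1.2) j q.2.2))
  exact ⟨abs_nonneg _, abs_le.2 ⟨by linarith, by linarith⟩⟩

lemma abs_coordDiff_update_sub_le (x : ∀ i, Ω i) (i j : Fin n) (a : Ω i × Ω i)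
    (p : Ω j × Ω j) :
    |coordDiff f (update x i a.1) j p - coordDiff f (update x i a.2) j p|
      ≤ coordDiff₂ f x i j (a, p) := by
  refine (abs_abs_sub_abs_le_abs_sub _ _).trans_eq ?_
  unfold coordDiff₂
  congr 1
  ring

variable [∀ i, MeasurableSpace (Ω i)] {μ : ∀ i, Measure (Ω i)}

lemma hDiff1_eq (i : Fin n) (x : ∀ i, Ω i) :
    hDiff1 n μ f i x = 1 / 2 * essSup (coordDiff f x i) ((μ i).prod (μ i)) :=
  rfl

lemma hDiff2_eq (i j : Fin n) (x : ∀ i, Ω i) :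
    hDiff2 n μ f i j x =
      1 / 4 * essSup (coordDiff₂ f x i j) (((μ i).prod (μ i)).prod ((μ j).prod (μ j))) :=
  rfl

lemma hDiff1_update_self (i : Fin n) (x : ∀ i, Ω i) (a : Ω i) :
    hDiff1 n μ f i (update x i a) = hDiff1 n μ f i x := by
  simp only [hDiff1, update_idem]

variable [∀ i, IsProbabilityMeasure (μ i)]

lemma hDiff1_nonneg (hb : ∀ x, |f x| ≤ C) (i : Fin n) (x : ∀ i, Ω i) :
    0 ≤ hDiff1 n μ f i x :=
  mul_nonneg (by norm_num)
    (essSup_nonneg_of_isBounded (fun _ => abs_nonneg _) (isBounded_range_coordDiff hb x i))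

lemma hDiff1_le (hb : ∀ x, |f x| ≤ C) (i : Fin n) (x : ∀ i, Ω i) : hDiff1 n μ f i x ≤ C := by
  have := essSup_le_of_isBounded (μ := (μ i).prod (μ i)) (isBounded_range_coordDiff hb x i)
    (ae_of_all _ fun q => (coordDiff_mem_Icc hb x i q).2)
  rw [hDiff1_eq]
  linarith

lemma hDiffNorm_le (hb : ∀ x, |f x| ≤ C) (x : ∀ i, Ω i) : hDiffNorm n μ f x ≤ √n * C := by
  have hC : 0 ≤ C := (abs_nonneg _).trans (hb x)
  calc hDiffNorm n μ f x ≤ √(∑ _i : Fin n, C ^ 2) :=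
        Real.sqrt_le_sqrt (Finset.sum_le_sum fun i _ =>
          pow_le_pow_left₀ (hDiff1_nonneg hb i x) (hDiff1_le hb i x) 2)
    _ = √n * C := by
        rw [Finset.sum_const, Finset.card_univ, Fintype.card_fin, nsmul_eq_mul,
          Real.sqrt_mul (Nat.cast_nonneg n), Real.sqrt_sq hC]

lemma abs_hDiffNorm_le (hb : ∀ x, |f x| ≤ C) (x : ∀ i, Ω i) :
    |hDiffNorm n μ f x| ≤ √n * C :=
  (abs_of_nonneg (Real.sqrt_nonneg _)).trans_le (hDiffNorm_le hb x)

lemma ae_abs_hDiff1_update_sub_le (hb : ∀ x, |f x| ≤ C) (i j : Fin n) (x : ∀ i, Ω i) :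
    ∀ᵐ q ∂(μ i).prod (μ i),
      |hDiff1 n μ f j (update x i q.1) - hDiff1 n μ f j (update x i q.2)|
        ≤ 2 * hDiff2 n μ f i j x := by
  have hsecond : ∀ᵐ q ∂((μ i).prod (μ i)).prod ((μ j).prod (μ j)),
      coordDiff₂ f x i j q ≤ 4 * hDiff2 n μ f i j x := by
    rw [hDiff2_eq, ← mul_assoc, show (4 : ℝ) * (1 / 4) = 1 by norm_num, one_mul]
    exact ae_le_essSup_of_isBounded (isBounded_range_coordDiff₂ hb x i j)
  filter_upwards [Measure.ae_ae_of_ae_prod hsecond] with a ha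
  have := abs_essSup_sub_essSup_le (isBounded_range_coordDiff hb _ j)
    (isBounded_range_coordDiff hb _ j)
    (ha.mono fun p hp => (abs_coordDiff_update_sub_le x i j a p).trans hp)
  rw [hDiff1_eq, hDiff1_eq, ← mul_sub, abs_mul, abs_of_pos (by norm_num : (0 : ℝ) < 1 / 2)]
  linarith

lemma hDiff1_hDiffNorm_le (hb : ∀ x, |f x| ≤ C) (i : Fin n) (x : ∀ i, Ω i) :
    hDiff1 n μ (hDiffNorm n μ f) i x
      ≤ √(∑ j, if i = j then 0 else hDiff2 n μ f i j x ^ 2) := by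
  set S := ∑ j, if i = j then 0 else hDiff2 n μ f i j x ^ 2
  have hpartial : ∀ᵐ q ∂(μ i).prod (μ i), ∀ j,
      (hDiff1 n μ f j (update x i q.1) - hDiff1 n μ f j (update x i q.2)) ^ 2
        ≤ 2 ^ 2 * if i = j then 0 else hDiff2 n μ f i j x ^ 2 := by
    rw [ae_all_iff]
    intro j
    by_cases hij : i = j
    · subst hij
      exact ae_of_all _ fun q => by simp [hDiff1_update_self]
    · filter_upwards [ae_abs_hDiff1_update_sub_le hb i j x] with q hq
      rw [if_neg hij, ← mul_pow, ← sq_abs]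
      exact pow_le_pow_left₀ (abs_nonneg _) hq 2
  have hosc : ∀ᵐ q ∂(μ i).prod (μ i), coordDiff (hDiffNorm n μ f) x i q ≤ 2 * √S := by
    filter_upwards [hpartial] with q hq
    calc coordDiff (hDiffNorm n μ f) x i q
        ≤ √(∑ j, (hDiff1 n μ f j (update x i q.1) - hDiff1 n μ f j (update x i q.2)) ^ 2) :=
          abs_sqrt_sum_sq_sub_sqrt_sum_sq_le _ _
      _ ≤ √(2 ^ 2 * S) :=
          Real.sqrt_le_sqrt <|
            (Finset.sum_le_sum fun j _ => hq j).trans_eq (Finset.mul_sum _ _ _).symm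
      _ = 2 * √S := by rw [Real.sqrt_mul (by norm_num), Real.sqrt_sq (by norm_num)]
  have := essSup_le_of_isBounded
    (isBounded_range_coordDiff (abs_hDiffNorm_le hb) x i) hosc
  rw [hDiff1_eq]
  linarith

end Differences

theorem stmt_15_general (n : ℕ) {Ω : Fin n → Type*} [∀ i, MeasurableSpace (Ω i)]
    (μ : ∀ i, Measure (Ω i)) [∀ i, IsProbabilityMeasure (μ i)]
    (f : (∀ i, Ω i) → ℝ) (C : ℝ) (hb : ∀ x, |f x| ≤ C)
    (x : ∀ i, Ω i) :
    Real.sqrt (∑ i, hDiff1 n μ (hDiffNorm n μ f) i x ^ 2)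
      ≤ Real.sqrt (∑ i, ∑ j, if i = j then 0 else hDiff2 n μ f i j x ^ 2) := by
  refine Real.sqrt_le_sqrt (Finset.sum_le_sum fun i _ => ?_)
  have hS : 0 ≤ ∑ j, if i = j then 0 else hDiff2 n μ f i j x ^ 2 :=
    Finset.sum_nonneg fun j _ => by positivity
  exact (Real.le_sqrt (hDiff1_nonneg (abs_hDiffNorm_le hb) i x) hS).1
    (hDiff1_hDiffNorm_le hb i x)

theorem stmt_15 (n : ℕ) {Ω : Fin n → Type*} [∀ i, MeasurableSpace (Ω i)]
    (μ : ∀ i, Measure (Ω i)) [∀ i, IsProbabilityMeasure (μ i)]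
    (f : (∀ i, Ω i) → ℝ) (hf : Measurable f) (C : ℝ) (hb : ∀ x, |f x| ≤ C)
    (x : ∀ i, Ω i) :
    Real.sqrt (∑ i, hDiff1 n μ (hDiffNorm n μ f) i x ^ 2)
      ≤ Real.sqrt (∑ i, ∑ j, if i = j then 0 else hDiff2 n μ f i j x ^ 2) :=
  stmt_15_general n μ f C hb x
end
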